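/- arXiv:2512.09374 — 9 statements merged into one kernel-verified Lean document; each statement's English description precedes it below -/
import Mathlib

section
/- Let m ≥ 1, let 𝓕 be a nonempty family of subsets of Fin m, and let W : Fin m → ℕ with minimum set-weight Wmin. If W does not min-isolate 𝓕 (i.e., at least two members of 𝓕 attain weight Wmin), then there exists an element e ∈ Fin m such that W(e) ≤ Wmin, min_{F ∈ 𝓕} W[e↦Wmin+1](F) ≤ Wmin, and min_{F ∈ 𝓕} W[e↦0](F) ≤ Wmin − W(e). -/
/-- If `W` does not min-isolate the nonempty family `𝓕` (at least two members
attain the minimum set-weight `Wmin`), then there is a (threshold) element `e`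
with `W e ≤ Wmin`, such that raising the weight of `e` to `Wmin + 1` keeps the
minimum set-weight at most `Wmin`, and zeroing the weight of `e` makes the
minimum set-weight at most `Wmin - W e`. -/
theorem stmt_0 (m : ℕ) (hm : 1 ≤ m)
    (𝓕 : Finset (Finset (Fin m))) (h𝓕 : 𝓕.Nonempty)
    (W : Fin m → ℕ) (Wmin : ℕ)
    (hWmin : Wmin = 𝓕.inf' h𝓕 (fun F => ∑ e ∈ F, W e))
    (hnotiso : ∃ F₁ ∈ 𝓕, ∃ F₂ ∈ 𝓕, F₁ ≠ F₂ ∧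
      (∑ e ∈ F₁, W e) = Wmin ∧ (∑ e ∈ F₂, W e) = Wmin) :
    ∃ e : Fin m,
      W e ≤ Wmin ∧
      𝓕.inf' h𝓕 (fun F => ∑ x ∈ F, Function.update W e (Wmin + 1) x) ≤ Wmin ∧
      𝓕.inf' h𝓕 (fun F => ∑ x ∈ F, Function.update W e 0 x) ≤ Wmin - W e := by
  obtain ⟨F₁, hF₁, F₂, hF₂, hne, h₁, h₂⟩ := hnotiso
  obtain ⟨A, B, hA, hB, hAw, hBw, e, heA, heB⟩ :
      ∃ A B, A ∈ 𝓕 ∧ B ∈ 𝓕 ∧ (∑ e ∈ A, W e) = Wmin ∧ (∑ e ∈ B, W e) = Wmin ∧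
        ∃ e, e ∈ A ∧ e ∉ B := by
    by_cases h : F₁ ⊆ F₂
    · have h' : ¬ F₂ ⊆ F₁ := fun h' => hne (Finset.Subset.antisymm h h')
      obtain ⟨e, he1, he2⟩ := Finset.not_subset.mp h'
      exact ⟨F₂, F₁, hF₂, hF₁, h₂, h₁, e, he1, he2⟩
    · obtain ⟨e, he1, he2⟩ := Finset.not_subset.mp h
      exact ⟨F₁, F₂, hF₁, hF₂, h₁, h₂, e, he1, he2⟩
  refine ⟨e, ?_, ?_, ?_⟩
  · calc W e ≤ ∑ x ∈ A, W x := Finset.single_le_sum (fun i _ => Nat.zero_le _) heA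
    _ = Wmin := hAw
  · calc 𝓕.inf' h𝓕 (fun F => ∑ x ∈ F, Function.update W e (Wmin + 1) x)
        ≤ ∑ x ∈ B, Function.update W e (Wmin + 1) x := Finset.inf'_le _ hB
    _ = ∑ x ∈ B, W x := Finset.sum_update_of_notMem heB W (Wmin + 1)
    _ = Wmin := hBw
  · have hsplit : ∑ x ∈ A, W x = W e + ∑ x ∈ A.erase e, W x :=
      (Finset.add_sum_erase A W heA).symm
    calc 𝓕.inf' h𝓕 (fun F => ∑ x ∈ F, Function.update W e 0 x)
        ≤ ∑ x ∈ A, Function.update W e 0 x := Finset.inf'_le _ hA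
    _ = 0 + ∑ x ∈ A \ {e}, W x := Finset.sum_update_of_mem heA W 0
    _ = ∑ x ∈ A.erase e, W x := by rw [zero_add, Finset.sdiff_singleton_eq_erase]
    _ ≤ Wmin - W e := by omega
end

section
/- Let m ≥ 1, let 𝓕 be a nonempty family of subsets of Fin m, and let W : Fin m → ℕ with minimum set-weight Wmin. If e ∈ Fin m satisfies W(e) ≥ 1 and min_{F ∈ 𝓕} W[e↦0](F) + W(e) ≤ Wmin, then there exists F ∈ 𝓕 with W(F) = Wmin and e ∈ F. -/
/-- If `W e ≥ 1` and zeroing the weight of `e` drops the minimum set-weight to at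
most `Wmin - W e` (stated additively), then some minimum-weight member of `𝓕`
contains `e`. -/
theorem stmt_2 (m : ℕ) (hm : 1 ≤ m)
    (𝓕 : Finset (Finset (Fin m))) (h𝓕 : 𝓕.Nonempty)
    (W : Fin m → ℕ) (Wmin : ℕ)
    (hWmin : Wmin = 𝓕.inf' h𝓕 (fun F => ∑ e ∈ F, W e))
    (e : Fin m) (he : 1 ≤ W e)
    (h : 𝓕.inf' h𝓕 (fun F => ∑ x ∈ F, Function.update W e 0 x) + W e ≤ Wmin) :
    ∃ F ∈ 𝓕, (∑ x ∈ F, W x) = Wmin ∧ e ∈ F := by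
  obtain ⟨F, hF, hFeq⟩ := Finset.exists_mem_eq_inf' h𝓕
    (fun F => ∑ x ∈ F, Function.update W e 0 x)
  have hW' : ∀ x ∈ F, x ≠ e → Function.update W e 0 x = W x := fun x _ hx =>
    Function.update_of_ne hx 0 W
  have hle : ∀ G ∈ 𝓕, Wmin ≤ ∑ x ∈ G, W x := by
    intro G hG
    rw [hWmin]
    exact Finset.inf'_le _ hG
  by_cases heF : e ∈ F
  · refine ⟨F, hF, ?_, heF⟩
    have hsum : ∑ x ∈ F, W x = (∑ x ∈ F, Function.update W e 0 x) + W e := by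
      rw [← Finset.add_sum_erase F W heF, ← Finset.add_sum_erase F _ heF,
        Function.update_self]
      rw [Finset.sum_congr rfl (fun x hx =>
        Function.update_of_ne (Finset.ne_of_mem_erase hx) 0 W)]
      ring
    have h1 : ∑ x ∈ F, W x ≤ Wmin := by rw [hsum, ← hFeq]; exact h
    exact le_antisymm h1 (hle F hF)
  · exfalso
    have hsum : ∑ x ∈ F, Function.update W e 0 x = ∑ x ∈ F, W x :=
      Finset.sum_congr rfl (fun x hx => Function.update_of_ne (by rintro rfl; exact heF hx) 0 W)
    have h2 := hle F hF
    rw [hFeq, hsum] at h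
    omega
end

section
/- Let m ≥ 1, let 𝓕 be a nonempty family of subsets of Fin m, and let W : Fin m → ℕ with minimum set-weight Wmin. If e ∈ Fin m satisfies W(e) ≥ 1, min_{F ∈ 𝓕} W[e↦Wmin+1](F) ≤ Wmin, and min_{F ∈ 𝓕} W[e↦0](F) + W(e) ≤ Wmin, then e is a threshold element for (𝓕, W); in particular W does not min-isolate 𝓕 (there exist two distinct members of 𝓕 both attaining weight Wmin, one containing e and one not containing e). -/
/-- If `W e ≥ 1`, raising the weight of `e` to `Wmin + 1` keeps the minimum
set-weight at most `Wmin`, and zeroing the weight of `e` drops it to at most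
`Wmin - W e` (stated additively), then `e` is a threshold element: there are two
distinct members of `𝓕`, both of weight `Wmin`, one containing `e` and one not;
in particular `W` does not min-isolate `𝓕`. -/
theorem stmt_3 (m : ℕ) (hm : 1 ≤ m)
    (𝓕 : Finset (Finset (Fin m))) (h𝓕 : 𝓕.Nonempty)
    (W : Fin m → ℕ) (Wmin : ℕ)
    (hWmin : Wmin = 𝓕.inf' h𝓕 (fun F => ∑ e ∈ F, W e))
    (e : Fin m) (he : 1 ≤ W e)
    (h1 : 𝓕.inf' h𝓕 (fun F => ∑ x ∈ F, Function.update W e (Wmin + 1) x) ≤ Wmin)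
    (h2 : 𝓕.inf' h𝓕 (fun F => ∑ x ∈ F, Function.update W e 0 x) + W e ≤ Wmin) :
    ∃ F₁ ∈ 𝓕, ∃ F₂ ∈ 𝓕, F₁ ≠ F₂ ∧
      (∑ x ∈ F₁, W x) = Wmin ∧ (∑ x ∈ F₂, W x) = Wmin ∧
      e ∈ F₁ ∧ e ∉ F₂ := by
  have hlow : ∀ F ∈ 𝓕, Wmin ≤ ∑ x ∈ F, W x := by
    intro F hF
    rw [hWmin]
    exact Finset.inf'_le _ hF
  -- get F₂ from h1
  obtain ⟨F₂, hF₂, hF₂eq⟩ := Finset.exists_mem_eq_inf' h𝓕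
    (fun F => ∑ x ∈ F, Function.update W e (Wmin + 1) x)
  rw [hF₂eq] at h1
  have heF₂ : e ∉ F₂ := by
    intro heF₂
    have := Finset.single_le_sum (f := fun x => Function.update W e (Wmin + 1) x)
      (fun i _ => Nat.zero_le _) heF₂
    simp [Function.update_self] at this
    omega
  have hsum₂ : ∑ x ∈ F₂, Function.update W e (Wmin + 1) x = ∑ x ∈ F₂, W x :=
    Finset.sum_congr rfl (fun x hx => Function.update_of_ne (by rintro rfl; exact heF₂ hx) _ _)
  rw [hsum₂] at h1
  have hW₂ : ∑ x ∈ F₂, W x = Wmin := le_antisymm h1 (hlow _ hF₂)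
  -- get F₁ from h2
  obtain ⟨F₁, hF₁, hF₁eq⟩ := Finset.exists_mem_eq_inf' h𝓕
    (fun F => ∑ x ∈ F, Function.update W e 0 x)
  rw [hF₁eq] at h2
  have heF₁ : e ∈ F₁ := by
    by_contra heF₁
    have hsum₁ : ∑ x ∈ F₁, Function.update W e 0 x = ∑ x ∈ F₁, W x :=
      Finset.sum_congr rfl (fun x hx => Function.update_of_ne (by rintro rfl; exact heF₁ hx) _ _)
    have := hlow _ hF₁
    omega
  have hsum₁ : ∑ x ∈ F₁, W x = (∑ x ∈ F₁, Function.update W e 0 x) + W e := by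
    rw [Finset.sum_update_of_mem heF₁, zero_add,
      Finset.sum_eq_sum_sdiff_singleton_add heF₁ W]
  have hW₁ : ∑ x ∈ F₁, W x = Wmin := le_antisymm (by omega) (hlow _ hF₁)
  exact ⟨F₁, hF₁, F₂, hF₂, fun h => heF₂ (h ▸ heF₁), hW₁, hW₂, heF₁, heF₂⟩
end

section
/- Let m ≥ 1, let 𝓕 be a nonempty family of subsets of Fin m, and let W : Fin m → ℕ with minimum set-weight Wmin. Suppose W min-isolates 𝓕, with F* the unique member of 𝓕 of weight Wmin. Then for every e ∈ Fin m: e ∈ F* if and only if min_{F ∈ 𝓕} W[e↦Wmin+1](F) > Wmin. (Thus the unique minimum-weight witness can be extracted bit by bit from the weighted decision oracle.) -/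
/-- If `W` min-isolates `𝓕` with unique minimum-weight member `Fstar`, then for
every element `e`: `e ∈ Fstar` iff raising the weight of `e` to `Wmin + 1`
pushes the minimum set-weight of the family strictly above `Wmin`. -/
theorem stmt_4 (m : ℕ) (hm : 1 ≤ m)
    (𝓕 : Finset (Finset (Fin m))) (h𝓕 : 𝓕.Nonempty)
    (W : Fin m → ℕ) (Wmin : ℕ)
    (hWmin : Wmin = 𝓕.inf' h𝓕 (fun F => ∑ e ∈ F, W e))
    (Fstar : Finset (Fin m)) (hFstar : Fstar ∈ 𝓕)
    (hFmin : (∑ x ∈ Fstar, W x) = Wmin)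
    (huniq : ∀ F ∈ 𝓕, (∑ x ∈ F, W x) = Wmin → F = Fstar) :
    ∀ e : Fin m,
      e ∈ Fstar ↔
        Wmin < 𝓕.inf' h𝓕 (fun F => ∑ x ∈ F, Function.update W e (Wmin + 1) x) := by
  intro e
  constructor
  · intro he
    rw [Finset.lt_inf'_iff]
    intro F hF
    by_cases heF : e ∈ F
    · have hsum : (∑ x ∈ F, Function.update W e (Wmin + 1) x)
        = ∑ x ∈ F.erase e, W x + (Wmin + 1) := by
        rw [← Finset.sum_erase_add _ _ heF]
        congr 1
        · exact Finset.sum_congr rfl fun x hx =>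
            Function.update_of_ne (Finset.ne_of_mem_erase hx) _ _
        · simp
      rw [hsum]; omega
    · have hsum : (∑ x ∈ F, Function.update W e (Wmin + 1) x) = ∑ x ∈ F, W x :=
        Finset.sum_congr rfl fun x hx =>
          Function.update_of_ne (by rintro rfl; exact heF hx) _ _
      rw [hsum]
      have h1 : Wmin ≤ ∑ x ∈ F, W x := hWmin ▸ Finset.inf'_le _ hF
      rcases lt_or_eq_of_le h1 with h | h
      · exact h
      · exact absurd (huniq F hF h.symm) fun hFe => heF (hFe ▸ he)
  · intro h
    by_contra he
    have hsum : (∑ x ∈ Fstar, Function.update W e (Wmin + 1) x) = ∑ x ∈ Fstar, W x :=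
      Finset.sum_congr rfl fun x hx =>
        Function.update_of_ne (by rintro rfl; exact he hx) _ _
    have hle := Finset.inf'_le (fun F => ∑ x ∈ F, Function.update W e (Wmin + 1) x) hFstar
    rw [hsum, hFmin] at hle
    omega
end

section
/- Let m ≥ 1, let 𝓕 be a nonempty family of subsets of Fin m, and let W : Fin m → ℕ with minimum set-weight Wmin. Suppose e ∈ Fin m is a threshold element for (𝓕, W), i.e., there exist F₁, F₂ ∈ 𝓕 with W(F₁) = W(F₂) = Wmin and e ∈ F₁ \ F₂. Then for every B > Wmin: min_{F ∈ 𝓕} W[e↦B](F) = Wmin and min_{F ∈ 𝓕} W[e↦0](F) = Wmin − W(e). Consequently W(e) = min_{F ∈ 𝓕} W[e↦B](F) − min_{F ∈ 𝓕} W[e↦0](F), so the erased weight W(e) can be recomputed from the two modified weight functions (correctness of the paper's Recompute procedure). -/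
/-- If `e` is a threshold element for `(𝓕, W)` (witnessed by minimum-weight
members `F₁ ∋ e` and `F₂ ∌ e`), then for every `B > Wmin` the minimum set-weight
under `W[e ↦ B]` equals `Wmin`, the minimum set-weight under `W[e ↦ 0]` equals
`Wmin - W e`, and consequently `W e` is the difference of these two minima. -/
theorem stmt_5 (m : ℕ) (hm : 1 ≤ m)
    (𝓕 : Finset (Finset (Fin m))) (h𝓕 : 𝓕.Nonempty)
    (W : Fin m → ℕ) (Wmin : ℕ)
    (hWmin : Wmin = 𝓕.inf' h𝓕 (fun F => ∑ e ∈ F, W e))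
    (e : Fin m) (F₁ F₂ : Finset (Fin m)) (hF₁ : F₁ ∈ 𝓕) (hF₂ : F₂ ∈ 𝓕)
    (h₁ : (∑ x ∈ F₁, W x) = Wmin) (h₂ : (∑ x ∈ F₂, W x) = Wmin)
    (he₁ : e ∈ F₁) (he₂ : e ∉ F₂) :
    ∀ B : ℕ, Wmin < B →
      𝓕.inf' h𝓕 (fun F => ∑ x ∈ F, Function.update W e B x) = Wmin ∧
      𝓕.inf' h𝓕 (fun F => ∑ x ∈ F, Function.update W e 0 x) = Wmin - W e ∧
      W e = 𝓕.inf' h𝓕 (fun F => ∑ x ∈ F, Function.update W e B x) -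
            𝓕.inf' h𝓕 (fun F => ∑ x ∈ F, Function.update W e 0 x) := by
  intro B hB
  have hWe : W e ≤ Wmin := by
    rw [← h₁]
    exact Finset.single_le_sum (fun i _ => Nat.zero_le _) he₁
  have hmin : ∀ F ∈ 𝓕, Wmin ≤ ∑ x ∈ F, W x := by
    intro F hF
    rw [hWmin]
    exact Finset.inf'_le _ hF
  -- sums with update, when e ∉ F, are unchanged
  have hnot : ∀ (a : ℕ) (F : Finset (Fin m)), e ∉ F →
      (∑ x ∈ F, Function.update W e a x) = ∑ x ∈ F, W x := by
    intro a F hF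
    exact Finset.sum_congr rfl fun x hx =>
      Function.update_of_ne (by rintro rfl; exact hF hx) _ _
  have hmem : ∀ (a : ℕ) (F : Finset (Fin m)), e ∈ F →
      (∑ x ∈ F, Function.update W e a x) = a + ∑ x ∈ F \ {e}, W x := by
    intro a F hF
    exact Finset.sum_update_of_mem hF _ _
  have hsplit : ∀ F : Finset (Fin m), e ∈ F →
      (∑ x ∈ F, W x) = (∑ x ∈ F \ {e}, W x) + W e := by
    intro F hF
    exact Finset.sum_eq_sum_sdiff_singleton_add hF W
  have hA : 𝓕.inf' h𝓕 (fun F => ∑ x ∈ F, Function.update W e B x) = Wmin := by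
    apply le_antisymm
    · calc 𝓕.inf' h𝓕 (fun F => ∑ x ∈ F, Function.update W e B x)
          ≤ ∑ x ∈ F₂, Function.update W e B x := Finset.inf'_le _ hF₂
        _ = Wmin := by rw [hnot B F₂ he₂, h₂]
    · apply Finset.le_inf'
      intro F hF
      by_cases h : e ∈ F
      · rw [hmem B F h]
        omega
      · rw [hnot B F h]
        exact hmin F hF
  have hC : 𝓕.inf' h𝓕 (fun F => ∑ x ∈ F, Function.update W e 0 x) = Wmin - W e := by
    apply le_antisymm
    · calc 𝓕.inf' h𝓕 (fun F => ∑ x ∈ F, Function.update W e 0 x)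
          ≤ ∑ x ∈ F₁, Function.update W e 0 x := Finset.inf'_le _ hF₁
        _ = Wmin - W e := by
            rw [hmem 0 F₁ he₁]
            have := hsplit F₁ he₁
            omega
    · apply Finset.le_inf'
      intro F hF
      by_cases h : e ∈ F
      · rw [hmem 0 F h]
        have h1 := hsplit F h
        have h2 := hmin F hF
        omega
      · rw [hnot 0 F h]
        have := hmin F hF
        omega
  exact ⟨hA, hC, by omega⟩
end

section
/- Let C be a finite type, f : C → C, and Halt ⊆ C with f x = x for every x ∈ Halt. Let T be a finite type and s, h : T → C with h injective, and k : T → ℕ, such that for every τ ∈ T the run from s(τ) first halts at time k(τ) with f^[k(τ)](s(τ)) = h(τ) ∈ Halt. Then ∑_{τ ∈ T} (k(τ) + 1) ≤ |C|. In particular, the average run length over τ ∈ T is at most |C| / |T|. -/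
/-- Since computation paths for distinct catalytic contents are pairwise
disjoint, the total number of configurations visited over all initial contents,
namely `∑ τ, (k τ + 1)`, is at most the total number of configurations `|C|`. -/
theorem stmt_8 {C : Type*} [Fintype C] (f : C → C) (Halt : Set C)
    (hHalt : ∀ x ∈ Halt, f x = x)
    {T : Type*} [Fintype T] (s h : T → C) (hinj : Function.Injective h) (k : T → ℕ)
    (hrun : ∀ τ : T, f^[k τ] (s τ) = h τ ∧ h τ ∈ Halt ∧ ∀ i < k τ, f^[i] (s τ) ∉ Halt) :
    ∑ τ : T, (k τ + 1) ≤ Fintype.card C := by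
  classical
  have key : ∀ τ m, k τ ≤ m → f^[m] (s τ) = h τ := by
    intro τ m hm
    obtain ⟨d, rfl⟩ := Nat.exists_eq_add_of_le hm
    rw [add_comm, Function.iterate_add_apply, (hrun τ).1,
      Function.iterate_fixed (hHalt _ (hrun τ).2.1)]
  -- injectivity within one path
  have inj1 : ∀ τ i j, i ≤ k τ → j ≤ k τ → f^[i] (s τ) = f^[j] (s τ) → i = j := by
    have aux : ∀ τ i j, i ≤ j → j ≤ k τ → f^[i] (s τ) = f^[j] (s τ) → i = j := by
      intro τ i j hij hj heq
      by_contra hne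
      have hlt : i < j := lt_of_le_of_ne hij hne
      have : f^[k τ - j + i] (s τ) ∈ Halt := by
        have h1 : f^[k τ - j + i] (s τ) = f^[k τ - j] (f^[i] (s τ)) :=
          Function.iterate_add_apply f _ _ _
        have h2 : f^[k τ - j] (f^[j] (s τ)) = f^[k τ] (s τ) := by
          rw [← Function.iterate_add_apply, Nat.sub_add_cancel hj]
        rw [h1, heq, h2, (hrun τ).1]
        exact (hrun τ).2.1
      exact (hrun τ).2.2 _ (by omega) this
    intro τ i j hi hj heq
    rcases le_total i j with hle | hle
    · exact aux τ i j hle hj heq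
    · exact (aux τ j i hle hi heq.symm).symm
  have hg : Function.Injective (fun p : Σ τ : T, Fin (k τ + 1) => f^[p.2] (s p.1)) := by
    rintro ⟨τ, i⟩ ⟨τ', j⟩ heq
    simp only at heq
    have htau : τ = τ' := by
      apply hinj
      have e1 : f^[k τ + k τ' + i] (s τ) = f^[k τ + k τ' + j] (s τ') := by
        simp only [Function.iterate_add_apply, heq]
      rwa [key τ _ (by omega), key τ' _ (by omega)] at e1
    subst htau
    have : (i : ℕ) = j := inj1 τ i j (by omega) (by omega) heq
    simp [Fin.ext_iff, this]
  calc ∑ τ : T, (k τ + 1) = Fintype.card (Σ τ : T, Fin (k τ + 1)) := by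
        simp [Fintype.card_sigma]
    _ ≤ Fintype.card C := Fintype.card_le_of_injective _ hg
end

section
/- Let C be a finite type, f : C → C, and Halt ⊆ C with f x = x for every x ∈ Halt. Let T be a finite type and s, h : T → C with h injective, and k : T → ℕ, such that for every τ ∈ T the run from s(τ) first halts at time k(τ) with f^[k(τ)](s(τ)) = h(τ) ∈ Halt. Then for every B ≥ 1, the number of indices with long runs satisfies B · |{τ ∈ T : k(τ) ≥ B}| ≤ |C|. (This is the Markov-inequality step showing that, for a uniformly random initial catalytic tape, a catalytic machine halts within |C|/|T| · n steps except with small probability.) -/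
/-- Markov-inequality step: under the disjoint-computation-paths hypotheses, for
every `B ≥ 1` the number of initial catalytic contents whose run length is at
least `B` satisfies `B · #{τ : k τ ≥ B} ≤ |C|`. -/
theorem stmt_9 {C : Type*} [Fintype C] (f : C → C) (Halt : Set C)
    (hHalt : ∀ x ∈ Halt, f x = x)
    {T : Type*} [Fintype T] (s h : T → C) (hinj : Function.Injective h) (k : T → ℕ)
    (hrun : ∀ τ : T, f^[k τ] (s τ) = h τ ∧ h τ ∈ Halt ∧ ∀ i < k τ, f^[i] (s τ) ∉ Halt) :
    ∀ B : ℕ, 1 ≤ B →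
      B * (Finset.univ.filter fun τ : T => B ≤ k τ).card ≤ Fintype.card C := by
  intro B hB
  classical
  have hfix : ∀ (m : ℕ) (x : C), x ∈ Halt → f^[m] x = x := by
    intro m
    induction m with
    | zero => intro x hx; simp
    | succ n ih =>
      intro x hx
      rw [Function.iterate_succ_apply, hHalt x hx, ih x hx]
  -- after at least k τ steps we stay at h τ
  have habs : ∀ (τ : T) (m : ℕ), k τ ≤ m → f^[m] (s τ) = h τ := by
    intro τ m hm
    obtain ⟨h1, h2, _⟩ := hrun τ
    have : m = (m - k τ) + k τ := (Nat.sub_add_cancel hm).symm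
    rw [this, Function.iterate_add_apply, h1, hfix _ _ h2]
  set S := (Finset.univ.filter fun τ : T => B ≤ k τ) with hS
  have key : Function.Injective
      (fun p : S × Fin B => f^[(p.2 : ℕ)] (s (p.1 : T))) := by
    rintro ⟨⟨τ, hτ⟩, i⟩ ⟨⟨τ', hτ'⟩, j⟩ heq
    simp only at heq
    have hkτ : B ≤ k τ := by simpa [hS] using hτ
    have hkτ' : B ≤ k τ' := by simpa [hS] using hτ'
    have hττ' : τ = τ' := by
      apply hinj
      have := congrArg (f^[max (k τ) (k τ')]) heq
      rw [← Function.iterate_add_apply, ← Function.iterate_add_apply] at this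
      rw [habs τ _ (le_trans (le_max_left _ _) (Nat.le_add_right _ _)),
        habs τ' _ (le_trans (le_max_right _ _) (Nat.le_add_right _ _))] at this
      exact this
    subst hττ'
    -- now show i = j
    have hij : (i : ℕ) = (j : ℕ) := by
      by_contra hne
      rcases Nat.lt_or_ge (i : ℕ) (j : ℕ) with hlt | hge
      · -- f^[kτ - (j-i)] (s τ) ∈ Halt, contradiction
        have hjk : (j : ℕ) ≤ k τ := le_trans (le_of_lt j.isLt) hkτ
        have e1 : f^[k τ] (s τ) = f^[k τ - (j : ℕ) + (i : ℕ)] (s τ) := by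
          conv_lhs => rw [show k τ = (k τ - (j : ℕ)) + (j : ℕ) from (Nat.sub_add_cancel hjk).symm]
          rw [Function.iterate_add_apply, Function.iterate_add_apply, heq]
        have hlt' : k τ - (j : ℕ) + (i : ℕ) < k τ := by omega
        exact (hrun τ).2.2 _ hlt' (by rw [← e1, (hrun τ).1]; exact (hrun τ).2.1)
      · have hlt2 : (j : ℕ) < (i : ℕ) := lt_of_le_of_ne hge (fun a => hne a.symm)
        have hik : (i : ℕ) ≤ k τ := le_trans (le_of_lt i.isLt) hkτ
        have e1 : f^[k τ] (s τ) = f^[k τ - (i : ℕ) + (j : ℕ)] (s τ) := by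
          conv_lhs => rw [show k τ = (k τ - (i : ℕ)) + (i : ℕ) from (Nat.sub_add_cancel hik).symm]
          rw [Function.iterate_add_apply, Function.iterate_add_apply, heq]
        have hlt' : k τ - (i : ℕ) + (j : ℕ) < k τ := by omega
        exact (hrun τ).2.2 _ hlt' (by rw [← e1, (hrun τ).1]; exact (hrun τ).2.1)
    exact Prod.ext (by rfl) (Fin.ext hij)
  have := Fintype.card_le_of_injective _ key
  simpa [Fintype.card_prod, mul_comm] using this
end

section
/- Let V be a type, A : V → V → Prop, and layer : V → ℕ with layer(v) = layer(u) + 1 whenever A u v. Fix mid ∈ ℕ and s, t ∈ V with layer(s) < mid < layer(t), and suppose at least one s–t path exists. Let w, w' : V → ℕ satisfy: w(v) = 0 for every v with layer(v) = mid, and w'(v) = w(v) for every v with layer(v) ≠ mid. Assume: (a) for every u with layer(u) = mid lying on some s–t path, there is a unique minimum-w-weight s–u path and a unique minimum-w-weight u–t path; and (b) for all u ≠ v with layer(u) = layer(v) = mid, each lying on some s–t path, μ_w(s,u) + μ_w(u,t) + w'(u) ≠ μ_w(s,v) + μ_w(v,t) + w'(v). Then there is a unique minimum-w'-weight s–t path.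 -/
/-- `IsPath A s t l`: the nonempty list `l` is a path from `s` to `t` in the
directed graph with edge relation `A`. -/
def IsPath {V : Type*} (A : V → V → Prop) (s t : V) (l : List V) : Prop :=
  l ≠ [] ∧ l.head? = some s ∧ l.getLast? = some t ∧ l.Chain' A

/-- The weight of a path under a vertex-weight function: the sum of the weights
of its vertices. -/
def pathWeight {V : Type*} (w : V → ℕ) (l : List V) : ℕ :=
  (l.map w).sum

/-- `mu A w x y`: the minimum weight of an `x`–`y` path under `w`. -/
noncomputable def mu {V : Type*} (A : V → V → Prop) (w : V → ℕ) (x y : V) : ℕ :=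
  sInf {n | ∃ l, IsPath A x y l ∧ pathWeight w l = n}

/-! Every `s`–`t` path meets the middle layer exactly once, at position `mid - layer s`. Since `w`
vanishes there and `w'` agrees with `w` elsewhere, the `w'`-weight of such a path is the `w`-weight
of its two halves plus `w' u` for the crossing vertex `u`. Gluing minimum-weight halves shows that
the minimum `w'`-weight of an `s`–`t` path is the minimum over middle vertices `u` of
`μ_w(s,u) + μ_w(u,t) + w'(u)`, so every minimum path crosses at a minimiser of this quantity and
has `w`-minimal halves. By (b) the minimiser is unique, and by (a) so are the halves. -/

theorem List.take_succ_append_tail_drop {α : Type*} (l : List α) (i : ℕ) :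
    l.take (i + 1) ++ (l.drop i).tail = l := by
  rw [List.tail_drop, List.take_append_drop]

section Paths

variable {V : Type*} {A : V → V → Prop} {x y u : V} {l p q : List V}

theorem IsPath.eq_cons_tail (h : IsPath A x y l) : l = x :: l.tail := by
  obtain ⟨hne, hhead, -, -⟩ := h
  cases l with
  | nil => exact absurd rfl hne
  | cons a r => simpa using hhead

theorem IsPath.length_pos (h : IsPath A x y l) : 0 < l.length :=
  List.length_pos_iff.mpr h.1

theorem IsPath.getElem_zero (h : IsPath A x y l) (h0 : 0 < l.length) : l[0] = x := by
  simpa [List.head?_eq_getElem?, h0] using h.2.1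

theorem IsPath.getElem_length_sub_one (h : IsPath A x y l) (hlen : l.length - 1 < l.length) :
    l[l.length - 1] = y := by
  simpa [List.getLast?_eq_getElem?, hlen] using h.2.2.1

theorem IsPath.take (h : IsPath A x y l) {i : ℕ} (hi : i < l.length) :
    IsPath A x l[i] (l.take (i + 1)) := by
  obtain ⟨hne, hhead, -, hchain⟩ := h
  refine ⟨?_, ?_, ?_, hchain.take _⟩
  · simpa using hne
  · simpa [List.head?_take] using hhead
  · simp [List.getLast?_take, hi]

theorem IsPath.drop (h : IsPath A x y l) {i : ℕ} (hi : i < l.length) :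
    IsPath A l[i] y (l.drop i) := by
  obtain ⟨-, -, hlast, hchain⟩ := h
  refine ⟨?_, ?_, ?_, hchain.drop _⟩
  · simpa using hi
  · simp [List.head?_drop, hi]
  · simpa [List.getLast?_drop, Nat.not_le.mpr hi] using hlast

theorem IsPath.append (hp : IsPath A x u p) (hq : IsPath A u y q) :
    IsPath A x y (p ++ q.tail) := by
  obtain ⟨hpne, hphead, hplast, hpchain⟩ := hp
  have hqcons := hq.eq_cons_tail
  obtain ⟨-, -, hqlast, hqchain⟩ := hq
  rw [hqcons] at hqlast hqchain
  rcases hr : q.tail with _ | ⟨b, r⟩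
  · rw [hr] at hqlast
    obtain rfl : u = y := by simpa using hqlast
    rw [List.append_nil]
    exact ⟨hpne, hphead, hplast, hpchain⟩
  · rw [hr] at hqlast hqchain
    refine ⟨by simp [hpne], by simp [List.head?_append, hphead], ?_, ?_⟩
    · simpa [List.getLast?_append] using hqlast
    · refine hpchain.append hqchain.tail ?_
      simp only [hplast, Option.mem_def, Option.some.injEq, List.head?_cons]
      rintro _ rfl _ rfl
      exact (List.isChain_cons_cons.mp hqchain).1

end Paths

section Weights

variable {V : Type*} {A : V → V → Prop} {x y u : V} {l q : List V}

theorem IsPath.pathWeight_append_tail (w : V → ℕ) (p : List V) (hq : IsPath A u y q) :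
    pathWeight w (p ++ q.tail) + w u = pathWeight w p + pathWeight w q := by
  conv_rhs => rw [hq.eq_cons_tail]
  simp only [pathWeight, List.map_append, List.sum_append, List.map_cons, List.sum_cons]
  omega

theorem pathWeight_add_eq_of_forall_ne {w w' : V → ℕ} {l : List V} {i : ℕ} (hi : i < l.length)
    (h : ∀ j (hj : j < l.length), j ≠ i → w' l[j] = w l[j]) :
    pathWeight w' l + w l[i] = pathWeight w l + w' l[i] := by
  induction l generalizing i with
  | nil => simp at hi
  | cons a r ih =>
    cases i with
    | zero =>
      have hr : r.map w' = r.map w := List.map_congr_left fun x hx => by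
        obtain ⟨j, hj, rfl⟩ := List.getElem_of_mem hx
        exact h (j + 1) (by simpa) (by omega)
      simp only [pathWeight, List.map_cons, List.sum_cons, hr, List.getElem_cons_zero]
      omega
    | succ k =>
      have ha := h 0 (by simp) (by omega)
      have hr := ih (i := k) (by simpa using hi)
        (fun j hj hjk => h (j + 1) (by simpa) (by omega))
      simp only [pathWeight, List.map_cons, List.sum_cons, List.getElem_cons_zero,
        List.getElem_cons_succ] at ha hr ⊢
      omega

theorem mu_le {w : V → ℕ} (h : IsPath A x y l) : mu A w x y ≤ pathWeight w l :=
  Nat.sInf_le ⟨l, h, rfl⟩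

theorem exists_isPath_pathWeight_eq_mu (w : V → ℕ) (h : ∃ l, IsPath A x y l) :
    ∃ l, IsPath A x y l ∧ pathWeight w l = mu A w x y := by
  obtain ⟨l, hl⟩ := h
  exact Nat.sInf_mem (s := {n | ∃ l, IsPath A x y l ∧ pathWeight w l = n}) ⟨_, l, hl, rfl⟩

def IsMinPath (A : V → V → Prop) (w : V → ℕ) (x y : V) (l : List V) : Prop :=
  IsPath A x y l ∧ ∀ l', IsPath A x y l' → pathWeight w l ≤ pathWeight w l'

theorem IsPath.isMinPath_of_pathWeight_le {w : V → ℕ} (h : IsPath A x y l)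
    (hw : pathWeight w l ≤ mu A w x y) : IsMinPath A w x y l :=
  ⟨h, fun _ hl' => hw.trans (mu_le hl')⟩

theorem IsMinPath.pathWeight_eq_mu {w : V → ℕ} (h : IsMinPath A w x y l) :
    pathWeight w l = mu A w x y := by
  obtain ⟨l', hl', hw⟩ := exists_isPath_pathWeight_eq_mu w ⟨l, h.1⟩
  exact le_antisymm (hw ▸ h.2 l' hl') (mu_le h.1)

theorem exists_isMinPath (w : V → ℕ) (h : ∃ l, IsPath A x y l) :
    ∃ l, IsMinPath A w x y l := by
  obtain ⟨l, hl, hw⟩ := exists_isPath_pathWeight_eq_mu w h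
  exact ⟨l, hl.isMinPath_of_pathWeight_le hw.le⟩

end Weights

section Layered

variable {V : Type*} {A : V → V → Prop} {layer : V → ℕ} {x y u : V} {l p q : List V}
  {w w' : V → ℕ} {mid : ℕ}

def IsLayering (A : V → V → Prop) (layer : V → ℕ) : Prop :=
  ∀ u v, A u v → layer v = layer u + 1

theorem IsPath.layer_getElem (hlayer : IsLayering A layer) (h : IsPath A x y l) {i : ℕ}
    (hi : i < l.length) : layer l[i] = layer x + i := by
  induction i with
  | zero => rw [h.getElem_zero hi, Nat.add_zero]
  | succ k ih =>
    rw [hlayer _ _ (List.isChain_iff_getElem.mp h.2.2.2 k hi), ih (by omega), Nat.add_assoc]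

theorem IsPath.layer_add_one (hlayer : IsLayering A layer) (h : IsPath A x y l) :
    layer y + 1 = layer x + l.length := by
  have hpos := h.length_pos
  have := h.layer_getElem hlayer (i := l.length - 1) (by omega)
  rw [h.getElem_length_sub_one (by omega)] at this
  omega

theorem IsPath.exists_layer_getElem_eq (hlayer : IsLayering A layer) (h : IsPath A x y l)
    (hx : layer x ≤ mid) (hy : mid ≤ layer y) :
    ∃ hi : mid - layer x < l.length, layer l[mid - layer x] = mid := by
  have := h.layer_add_one hlayer
  refine ⟨by omega, ?_⟩
  rw [h.layer_getElem hlayer]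
  omega

theorem IsPath.pathWeight_eq_add_of_layer_eq (hlayer : IsLayering A layer)
    (hw0 : ∀ v, layer v = mid → w v = 0) (hagree : ∀ v, layer v ≠ mid → w' v = w v)
    (h : IsPath A x y l) {i : ℕ} (hi : i < l.length) (hmid : layer l[i] = mid) :
    pathWeight w' l = pathWeight w l + w' l[i] := by
  have hlayer_i := h.layer_getElem hlayer hi
  have := pathWeight_add_eq_of_forall_ne hi fun j hj hji =>
    hagree _ (by rw [h.layer_getElem hlayer hj]; omega)
  rw [hw0 _ hmid] at this
  omega

theorem IsPath.pathWeight_append_tail_of_layer_eq (hlayer : IsLayering A layer)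
    (hw0 : ∀ v, layer v = mid → w v = 0) (hagree : ∀ v, layer v ≠ mid → w' v = w v)
    (hp : IsPath A x u p) (hq : IsPath A u y q) (hu : layer u = mid) :
    pathWeight w' (p ++ q.tail) = pathWeight w p + pathWeight w q + w' u := by
  have hlast := hp.getElem_length_sub_one (Nat.sub_one_lt_of_lt hp.length_pos)
  have hfirst := hq.getElem_zero hq.length_pos
  have hp' := hp.pathWeight_eq_add_of_layer_eq hlayer hw0 hagree _ (hlast ▸ hu)
  have hq' := hq.pathWeight_eq_add_of_layer_eq hlayer hw0 hagree _ (hfirst ▸ hu)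
  rw [hlast] at hp'
  rw [hfirst] at hq'
  have := hq.pathWeight_append_tail w' p
  omega

theorem IsPath.pathWeight_eq_take_add_drop (hlayer : IsLayering A layer)
    (hw0 : ∀ v, layer v = mid → w v = 0) (hagree : ∀ v, layer v ≠ mid → w' v = w v)
    (h : IsPath A x y l) {i : ℕ} (hi : i < l.length) (hmid : layer l[i] = mid) :
    pathWeight w' l = pathWeight w (l.take (i + 1)) + pathWeight w (l.drop i) + w' l[i] := by
  have := (h.take hi).pathWeight_append_tail_of_layer_eq hlayer hw0 hagree (h.drop hi) hmid
  rwa [List.take_succ_append_tail_drop] at this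

end Layered

section Crossing

variable {V : Type*} {A : V → V → Prop} {layer : V → ℕ} {s t u : V} {l : List V}
  {w w' : V → ℕ} {mid : ℕ}

/-- For `u` in the middle layer, the least `w'`-weight of an `s`–`t` path through `u`. -/
noncomputable def crossWeight (A : V → V → Prop) (w w' : V → ℕ) (s t u : V) : ℕ :=
  mu A w s u + mu A w u t + w' u

theorem mu_le_crossWeight (hlayer : IsLayering A layer)
    (hw0 : ∀ v, layer v = mid → w v = 0) (hagree : ∀ v, layer v ≠ mid → w' v = w v)
    (hu : layer u = mid) (hsu : ∃ p, IsPath A s u p) (hut : ∃ q, IsPath A u t q) :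
    mu A w' s t ≤ crossWeight A w w' s t u := by
  obtain ⟨p, hp, hpw⟩ := exists_isPath_pathWeight_eq_mu w hsu
  obtain ⟨q, hq, hqw⟩ := exists_isPath_pathWeight_eq_mu w hut
  calc mu A w' s t ≤ pathWeight w' (p ++ q.tail) := mu_le (hp.append hq)
    _ = crossWeight A w w' s t u := by
      rw [hp.pathWeight_append_tail_of_layer_eq hlayer hw0 hagree hq hu, hpw, hqw, crossWeight]

theorem IsMinPath.crossing (hlayer : IsLayering A layer)
    (hw0 : ∀ v, layer v = mid → w v = 0) (hagree : ∀ v, layer v ≠ mid → w' v = w v)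
    (h : IsMinPath A w' s t l) {i : ℕ} (hi : i < l.length) (hmid : layer l[i] = mid) :
    crossWeight A w w' s t l[i] = mu A w' s t ∧ IsMinPath A w s l[i] (l.take (i + 1)) ∧
      IsMinPath A w l[i] t (l.drop i) := by
  have hsplit := h.1.pathWeight_eq_take_add_drop hlayer hw0 hagree hi hmid
  have hupper := mu_le_crossWeight hlayer hw0 hagree hmid ⟨_, h.1.take hi⟩ ⟨_, h.1.drop hi⟩
  have hmin := h.pathWeight_eq_mu
  have hsu := mu_le (w := w) (h.1.take hi)
  have hut := mu_le (w := w) (h.1.drop hi)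
  unfold crossWeight at hupper ⊢
  exact ⟨by omega, (h.1.take hi).isMinPath_of_pathWeight_le (by omega),
    (h.1.drop hi).isMinPath_of_pathWeight_le (by omega)⟩

end Crossing

/-- Inductive step of the block-system construction: in a layered DAG, if
`layer s < mid < layer t`, the old weights `w` vanish on the middle layer `mid`,
the new weights `w'` agree with `w` off the middle layer, within each half the
minimum-weight paths through any middle-layer vertex on an `s`–`t` path are
unique, and the disambiguation requirement holds for distinct middle-layer
vertices, then there is a unique minimum-`w'`-weight `s`–`t` path. -/
theorem stmt_14 {V : Type*} (A : V → V → Prop) (layer : V → ℕ)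
    (hlayer : ∀ u v, A u v → layer v = layer u + 1)
    (mid : ℕ) (s t : V) (hs : layer s < mid) (ht : mid < layer t)
    (hex : ∃ l, IsPath A s t l)
    (w w' : V → ℕ)
    (hw0 : ∀ v, layer v = mid → w v = 0)
    (hagree : ∀ v, layer v ≠ mid → w' v = w v)
    (ha : ∀ u, layer u = mid → (∃ l, IsPath A s t l ∧ u ∈ l) →
      (∃! l, IsPath A s u l ∧ ∀ l', IsPath A s u l' →
        pathWeight w l ≤ pathWeight w l') ∧
      (∃! l, IsPath A u t l ∧ ∀ l', IsPath A u t l' →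
        pathWeight w l ≤ pathWeight w l'))
    (hb : ∀ u v, u ≠ v → layer u = mid → layer v = mid →
      (∃ l, IsPath A s t l ∧ u ∈ l) → (∃ l, IsPath A s t l ∧ v ∈ l) →
      mu A w s u + mu A w u t + w' u ≠ mu A w s v + mu A w v t + w' v) :
    ∃! l, IsPath A s t l ∧ ∀ l', IsPath A s t l' →
      pathWeight w' l ≤ pathWeight w' l' := by
  obtain ⟨L, hL⟩ := exists_isMinPath w' hex
  refine ⟨L, hL, fun l hl => ?_⟩
  obtain ⟨hi, hmid⟩ := hl.1.exists_layer_getElem_eq hlayer hs.le ht.le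
  obtain ⟨hiL, hmidL⟩ := hL.1.exists_layer_getElem_eq hlayer hs.le ht.le
  obtain ⟨hcross, hsu, hut⟩ := IsMinPath.crossing hlayer hw0 hagree hl hi hmid
  obtain ⟨hcrossL, hsuL, hutL⟩ := IsMinPath.crossing hlayer hw0 hagree hL hiL hmidL
  have hLon : ∃ l, IsPath A s t l ∧ L[mid - layer s] ∈ l :=
    ⟨L, hL.1, List.getElem_mem hiL⟩
  have hu : l[mid - layer s] = L[mid - layer s] := by
    by_contra hne
    exact hb _ _ hne hmid hmidL ⟨l, hl.1, List.getElem_mem hi⟩ hLon (hcross.trans hcrossL.symm)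
  rw [hu] at hsu hut
  obtain ⟨hsu_unique, hut_unique⟩ := ha _ hmidL hLon
  rw [← l.take_succ_append_tail_drop (mid - layer s),
    ← L.take_succ_append_tail_drop (mid - layer s), hsu_unique.unique hsu hsuL,
    hut_unique.unique hut hutL]
end

section
/- Let V be a type, A : V → V → Prop, and layer : V → ℕ with layer(v) = layer(u) + 1 whenever A u v. Fix mid ∈ ℕ and s, t ∈ V with layer(s) ≤ layer(t) ≤ mid. Let w, w' : V → ℕ agree on every vertex v with layer(v) ≠ mid. If there is a unique minimum-w-weight s–t path, then there is a unique minimum-w'-weight s–t path, and it is the same path. (Re-weighting the middle layer cannot destroy min-isolation for pairs whose paths stay within one half of the block.) -/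
/-!
Every vertex of an `s`–`t` path other than `t` lies strictly below layer `layer t ≤ mid`, so
changing the weights on layer `mid` shifts the weight of every `s`–`t` path by the same amount
(from `w t` to `w' t`). A uniform shift preserves the set of minimisers.
-/

lemma layer_lt_of_mem_dropLast {V : Type*} {A : V → V → Prop} {layer : V → ℕ}
    (hlayer : ∀ u v, A u v → layer v = layer u + 1) {l : List V} (hl : l.IsChain A)
    {t : V} (ht : t ∈ l.getLast?) {v : V} (hv : v ∈ l.dropLast) : layer v < layer t := by
  have : Trans (fun u v : V => layer u < layer v) (fun u v => layer u < layer v)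
      (fun u v => layer u < layer v) := ⟨lt_trans⟩
  have hpw : l.Pairwise (fun u v => layer u < layer v) :=
    (List.IsChain.imp (fun u v huv => by rw [hlayer u v huv]; omega) hl).pairwise
  rw [← List.dropLast_append_getLast? t ht] at hpw
  exact (List.pairwise_append.1 hpw).2.2 v hv t (List.mem_singleton_self t)

lemma pathWeight_eq_dropLast_add {V : Type*} (w : V → ℕ) {l : List V} {t : V}
    (ht : t ∈ l.getLast?) : pathWeight w l = pathWeight w l.dropLast + w t := by
  conv_lhs => rw [← List.dropLast_append_getLast? t ht]
  simp [pathWeight]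

lemma pathWeight_add_eq_of_isPath {V : Type*} {A : V → V → Prop} {layer : V → ℕ}
    (hlayer : ∀ u v, A u v → layer v = layer u + 1) {mid : ℕ} {s t : V}
    (ht : layer t ≤ mid) {w w' : V → ℕ} (hagree : ∀ v, layer v ≠ mid → w' v = w v)
    {l : List V} (hp : IsPath A s t l) :
    pathWeight w' l + w t = pathWeight w l + w' t := by
  obtain ⟨-, -, hlast, hchain⟩ := hp
  have hbelow : pathWeight w' l.dropLast = pathWeight w l.dropLast :=
    congrArg List.sum <| List.map_congr_left fun v hv =>
      hagree v ((layer_lt_of_mem_dropLast hlayer hchain hlast hv).trans_le ht).ne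
  rw [pathWeight_eq_dropLast_add w' hlast, pathWeight_eq_dropLast_add w hlast, hbelow]
  ac_rfl

lemma forall_le_iff_of_add_eq_add {α M : Type*} [AddCommMonoid M] [PartialOrder M]
    [IsOrderedCancelAddMonoid M] {P : α → Prop} {f g : α → M} {c d : M}
    (h : ∀ a, P a → f a + c = g a + d) {a : α} (ha : P a) :
    (∀ b, P b → f a ≤ f b) ↔ (∀ b, P b → g a ≤ g b) :=
  forall₂_congr fun b hb => by
    rw [← add_le_add_iff_right c, h a ha, h b hb, add_le_add_iff_right]

theorem stmt_15_general {V : Type*} (A : V → V → Prop) (layer : V → ℕ)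
    (hlayer : ∀ u v, A u v → layer v = layer u + 1)
    (mid : ℕ) (s t : V) (ht : layer t ≤ mid)
    (w w' : V → ℕ)
    (hagree : ∀ v, layer v ≠ mid → w' v = w v)
    (l₀ : List V)
    (h₀ : IsPath A s t l₀ ∧ ∀ l', IsPath A s t l' →
      pathWeight w l₀ ≤ pathWeight w l')
    (huniq : ∀ l, (IsPath A s t l ∧ ∀ l', IsPath A s t l' →
      pathWeight w l ≤ pathWeight w l') → l = l₀) :
    (IsPath A s t l₀ ∧ ∀ l', IsPath A s t l' →
      pathWeight w' l₀ ≤ pathWeight w' l') ∧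
    ∀ l, (IsPath A s t l ∧ ∀ l', IsPath A s t l' →
      pathWeight w' l ≤ pathWeight w' l') → l = l₀ := by
  have hmin_iff : ∀ l, IsPath A s t l →
      ((∀ l', IsPath A s t l' → pathWeight w' l ≤ pathWeight w' l') ↔
        (∀ l', IsPath A s t l' → pathWeight w l ≤ pathWeight w l')) :=
    fun _ hl => forall_le_iff_of_add_eq_add
      (fun _ hp => pathWeight_add_eq_of_isPath hlayer ht hagree hp) hl
  exact ⟨⟨h₀.1, (hmin_iff l₀ h₀.1).2 h₀.2⟩,
    fun l hl => huniq l ⟨hl.1, (hmin_iff l hl.1).1 hl.2⟩⟩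

/-- Case 1 of the inductive step: in a layered DAG with
`layer s ≤ layer t ≤ mid`, if `w` and `w'` agree on every vertex outside layer
`mid` and there is a unique minimum-`w`-weight `s`–`t` path `l₀`, then `l₀` is
also the unique minimum-`w'`-weight `s`–`t` path. -/
theorem stmt_15 {V : Type*} (A : V → V → Prop) (layer : V → ℕ)
    (hlayer : ∀ u v, A u v → layer v = layer u + 1)
    (mid : ℕ) (s t : V) (hst : layer s ≤ layer t) (ht : layer t ≤ mid)
    (w w' : V → ℕ)
    (hagree : ∀ v, layer v ≠ mid → w' v = w v)
    (l₀ : List V)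
    (h₀ : IsPath A s t l₀ ∧ ∀ l', IsPath A s t l' →
      pathWeight w l₀ ≤ pathWeight w l')
    (huniq : ∀ l, (IsPath A s t l ∧ ∀ l', IsPath A s t l' →
      pathWeight w l ≤ pathWeight w l') → l = l₀) :
    (IsPath A s t l₀ ∧ ∀ l', IsPath A s t l' →
      pathWeight w' l₀ ≤ pathWeight w' l') ∧
    ∀ l, (IsPath A s t l ∧ ∀ l', IsPath A s t l' →
      pathWeight w' l ≤ pathWeight w' l') → l = l₀ :=
  stmt_15_general A layer hlayer mid s t ht w w' hagree l₀ h₀ huniq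
end
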